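/- If X is a real random variable with E[X] = 0, E[X²] = 1 and E|X|³ = β₃ < ∞, then for all real t with |t| ≤ θ₀/β₃, E[cos(tX)] ≤ 1 - t²/2 + κ β₃ |t|³, where κ = sup_{x>0} x⁻³(cos x - 1 + x²/2) and θ₀ is the unique root in [π,2π] of θ² + 2θ sin θ + 6(cos θ - 1) = 0. -/

import Mathlib

open MeasureTheory Real

theorem cos_le_one_sub_sq_div_two_add_mul_abs_pow_three {κ : ℝ}
    (hκ : κ ∈ upperBounds {y : ℝ | ∃ x > 0, y = x⁻¹ ^ 3 * (cos x - 1 + x ^ 2 / 2)}) (z : ℝ) :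
    cos z ≤ 1 - z ^ 2 / 2 + κ * |z| ^ 3 := by
  have of_pos : ∀ x : ℝ, 0 < x → cos x ≤ 1 - x ^ 2 / 2 + κ * x ^ 3 := by
    intro x hx
    have hle : (x ^ 3)⁻¹ * (cos x - 1 + x ^ 2 / 2) ≤ κ := by
      simpa only [inv_pow] using hκ ⟨x, hx, rfl⟩
    have := (inv_mul_le_iff₀ (pow_pos hx 3)).mp hle
    linarith
  rcases lt_trichotomy z 0 with hz | rfl | hz
  · have h := of_pos (-z) (neg_pos.mpr hz)
    rw [cos_neg, neg_sq] at h
    rwa [abs_of_neg hz]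
  · simp
  · rw [abs_of_pos hz]
    exact of_pos z hz

theorem integral_cos_mul_le {Ω : Type*} [MeasurableSpace Ω] {μ : Measure Ω}
    [IsProbabilityMeasure μ] {X : Ω → ℝ} (hXm : AEMeasurable X μ)
    (hX2 : Integrable (fun ω => X ω ^ 2) μ) (hX3 : Integrable (fun ω => |X ω| ^ 3) μ)
    {κ : ℝ} (hκ : ∀ z : ℝ, cos z ≤ 1 - z ^ 2 / 2 + κ * |z| ^ 3) (t : ℝ) :
    ∫ ω, cos (t * X ω) ∂μ ≤
      1 - t ^ 2 / 2 * ∫ ω, X ω ^ 2 ∂μ + κ * |t| ^ 3 * ∫ ω, |X ω| ^ 3 ∂μ := by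
  have hcos : Integrable (fun ω => cos (t * X ω)) μ :=
    Integrable.of_bound (by fun_prop) 1
      (Filter.Eventually.of_forall fun ω => by simpa using abs_cos_le_one (t * X ω))
  have hquad : Integrable (fun ω => 1 - t ^ 2 / 2 * X ω ^ 2) μ :=
    (integrable_const 1).sub (hX2.const_mul _)
  have hcubic : Integrable (fun ω => κ * |t| ^ 3 * |X ω| ^ 3) μ := hX3.const_mul _
  calc ∫ ω, cos (t * X ω) ∂μ
      ≤ ∫ ω, (1 - t ^ 2 / 2 * X ω ^ 2 + κ * |t| ^ 3 * |X ω| ^ 3) ∂μ := by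
        refine integral_mono hcos (hquad.add hcubic) fun ω => ?_
        calc cos (t * X ω) ≤ 1 - (t * X ω) ^ 2 / 2 + κ * |t * X ω| ^ 3 := hκ _
          _ = 1 - t ^ 2 / 2 * X ω ^ 2 + κ * |t| ^ 3 * |X ω| ^ 3 := by
            rw [abs_mul, mul_pow, mul_pow]; ring
    _ = 1 - t ^ 2 / 2 * ∫ ω, X ω ^ 2 ∂μ + κ * |t| ^ 3 * ∫ ω, |X ω| ^ 3 ∂μ := by
        rw [integral_add hquad hcubic, integral_sub (integrable_const 1) (hX2.const_mul _),
          integral_const_mul, integral_const_mul, integral_const, probReal_univ, one_smul]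

theorem stmt_8 {Ω : Type*} [MeasureSpace Ω] (μ : Measure Ω) [IsProbabilityMeasure μ]
    (X : Ω → ℝ) (hXm : Measurable X)
    (hX2 : Integrable (fun ω => X ω ^ 2) μ) (hvar : ∫ ω, X ω ^ 2 ∂μ = 1)
    (β₃ : ℝ) (hX3 : Integrable (fun ω => |X ω| ^ 3) μ)
    (hβ₃ : ∫ ω, |X ω| ^ 3 ∂μ = β₃)
    (κ : ℝ)
    (hκ : IsLUB {y : ℝ | ∃ x > 0, y = x⁻¹ ^ 3 * (Real.cos x - 1 + x ^ 2 / 2)} κ)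
    (t : ℝ) :
    ∫ ω, Real.cos (t * X ω) ∂μ ≤ 1 - t ^ 2 / 2 + κ * β₃ * |t| ^ 3 := by
  have h := integral_cos_mul_le hXm.aemeasurable hX2 hX3
    (cos_le_one_sub_sq_div_two_add_mul_abs_pow_three hκ.1) t
  rw [hvar, hβ₃] at h
  linarith
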